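/- Let κ' ∈ (0,1), F̃ ∈ sl(2,ℝ) a constant matrix with ε̃ := ‖F̃‖, Ñ ∈ ℕ, and Ã ∈ sl(2,ℝ) with BR_ω^{Ñ}(κ') spectrum. If ε̃ ≤ (κ'/(32(1 + ‖Ã‖)))² · 1/Ψ(Ñ)², then Ã + F̃ has BR_ω^{Ñ}(3κ'/4) spectrum. -/

import Mathlib

open scoped Real
open MeasureTheory

noncomputable section
namespace AR

abbrev M2R := Matrix (Fin 2) (Fin 2) ℝ
abbrev M2C := Matrix (Fin 2) (Fin 2) ℂ

variable {d : ℕ}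

/-- `|k| = Σᵢ |kᵢ|` for an integer frequency vector. -/
def absZ (k : Fin d → ℤ) : ℝ := ∑ i, |(k i : ℝ)|

def dotZ (k : Fin d → ℤ) (θ : Fin d → ℝ) : ℝ := ∑ i, (k i : ℝ) * θ i

def dotR (k θ : Fin d → ℝ) : ℝ := ∑ i, k i * θ i

/-- rationally independent frequency vector -/
def RatIndep (ω : Fin d → ℝ) : Prop := ∀ k : Fin d → ℤ, k ≠ 0 → dotZ k ω ≠ 0

/-- largest-coefficient norm of a real 2×2 matrix -/
def nrmR (A : M2R) : ℝ := ⨆ i, ⨆ j, |A i j|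

/-- largest-coefficient norm of a complex 2×2 matrix -/
def nrmC (A : M2C) : ℝ := ⨆ i, ⨆ j, ‖A i j‖

/-- complexification of a real matrix valued map -/
def cLift (F : (Fin d → ℝ) → M2R) : (Fin d → ℝ) → M2C :=
  fun θ => (F θ).map (fun x => (x : ℂ))

/-- `e^{2πix}` -/
def eK (x : ℝ) : ℂ := Complex.exp (((2 * π * x : ℝ) : ℂ) * Complex.I)

/-- Fourier coefficient of a function of period `p` in each variable. -/
def fCoeff (p : ℝ) (F : (Fin d → ℝ) → M2C) (k : Fin d → ℝ) : M2C :=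
  Matrix.of fun i j =>
    ((p ^ d : ℝ) : ℂ)⁻¹ *
      ∫ θ in Set.Icc (0 : Fin d → ℝ) (fun _ => p), F θ i j * eK (-(dotR k θ))

/-- the weight `e^{2πΛ(x)r}` -/
def wt (Λ : ℝ → ℝ) (r x : ℝ) : ℝ := Real.exp (2 * π * Λ x * r)

/-- `Λ,r`-norm of a complex-matrix valued function on `T^d` -/
def unormC (Λ : ℝ → ℝ) (r : ℝ) (F : (Fin d → ℝ) → M2C) : ℝ :=
  ∑' k : Fin d → ℤ, nrmC (fCoeff 1 F (fun i => (k i : ℝ))) * wt Λ r (absZ k)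

/-- `Λ,r`-norm of a real-matrix valued function on `T^d` -/
def unorm (Λ : ℝ → ℝ) (r : ℝ) (F : (Fin d → ℝ) → M2R) : ℝ := unormC Λ r (cLift F)

/-- `Λ,r`-norm of a complex-matrix valued function on `2T^d` (half-integer frequencies) -/
def unorm2C (Λ : ℝ → ℝ) (r : ℝ) (F : (Fin d → ℝ) → M2C) : ℝ :=
  ∑' k : Fin d → ℤ, nrmC (fCoeff 2 F (fun i => (k i : ℝ) / 2)) * wt Λ r (absZ k / 2)

def unorm2 (Λ : ℝ → ℝ) (r : ℝ) (F : (Fin d → ℝ) → M2R) : ℝ := unorm2C Λ r (cLift F)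

/-- `ℤ^d`-periodicity -/
def Per1 (F : (Fin d → ℝ) → M2R) : Prop :=
  ∀ (θ : Fin d → ℝ) (k : Fin d → ℤ), F (θ + fun i => (k i : ℝ)) = F θ

def Per1C (F : (Fin d → ℝ) → M2C) : Prop :=
  ∀ (θ : Fin d → ℝ) (k : Fin d → ℤ), F (θ + fun i => (k i : ℝ)) = F θ

/-- `2ℤ^d`-periodicity -/
def Per2 (F : (Fin d → ℝ) → M2R) : Prop :=
  ∀ (θ : Fin d → ℝ) (k : Fin d → ℤ), F (θ + fun i => 2 * (k i : ℝ)) = F θ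

def Per2C (F : (Fin d → ℝ) → M2C) : Prop :=
  ∀ (θ : Fin d → ℝ) (k : Fin d → ℤ), F (θ + fun i => 2 * (k i : ℝ)) = F θ

/-- membership in `U_r(T^d)` : continuity, periodicity and finite weighted Fourier norm -/
def MemU (Λ : ℝ → ℝ) (r : ℝ) (F : (Fin d → ℝ) → M2R) : Prop :=
  Continuous F ∧ Per1 F ∧
    Summable (fun k : Fin d → ℤ =>
      nrmC (fCoeff 1 (cLift F) (fun i => (k i : ℝ))) * wt Λ r (absZ k))

/-- membership in `U_r(2T^d)` -/
def MemU2 (Λ : ℝ → ℝ) (r : ℝ) (F : (Fin d → ℝ) → M2R) : Prop :=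
  Continuous F ∧ Per2 F ∧
    Summable (fun k : Fin d → ℤ =>
      nrmC (fCoeff 2 (cLift F) (fun i => (k i : ℝ) / 2)) * wt Λ r (absZ k / 2))

/-- directional derivative along `ω`, entrywise -/
def dOm (ω : Fin d → ℝ) (F : (Fin d → ℝ) → M2R) (θ : Fin d → ℝ) : M2R :=
  Matrix.of fun i j => deriv (fun t : ℝ => F (θ + t • ω) i j) 0

def dOmC (ω : Fin d → ℝ) (F : (Fin d → ℝ) → M2C) (θ : Fin d → ℝ) : M2C :=
  Matrix.of fun i j => deriv (fun t : ℝ => F (θ + t • ω) i j) 0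

/-- `A` has eigenvalues `α, β` (with multiplicity). -/
def eigPair (A : M2R) (α β : ℂ) : Prop :=
  (A.map (fun x => (x : ℂ))).charpoly =
    (Polynomial.X - Polynomial.C α) * (Polynomial.X - Polynomial.C β)

/-- `z ∈ BR_ω^N(κ')` -/
def BRnum (ω : Fin d → ℝ) (Ψ : ℝ → ℝ) (κ' N : ℝ) (z : ℂ) : Prop :=
  ∀ k : Fin d → ℤ, k ≠ 0 → absZ k ≤ N →
    κ' / Ψ (absZ k) ≤ ‖z - ((2 * π * dotZ k ω : ℝ) : ℂ) * Complex.I‖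

/-- `A` has `BR_ω^N(κ')` spectrum -/
def HasBR (ω : Fin d → ℝ) (Ψ : ℝ → ℝ) (κ' N : ℝ) (A : M2R) : Prop :=
  ∀ α β : ℂ, eigPair A α β → BRnum ω Ψ κ' N (α - β)

/-- a pair of complementary projections -/
def IsProjDecomp (P Q : M2C) : Prop :=
  P + Q = 1 ∧ P * P = P ∧ Q * Q = Q ∧ P * Q = 0 ∧ Q * P = 0

/-- `P, Q` are the spectral projections of `A` for the eigenvalues `α, β`. -/
def IsSpectralDecomp (A : M2R) (α β : ℂ) (P Q : M2C) : Prop :=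
  IsProjDecomp P Q ∧
    (A.map (fun x => (x : ℂ))) * P = α • P ∧ (A.map (fun x => (x : ℂ))) * Q = β • Q

/-- the trivial map `e^{2iπ⟨m,θ⟩}P + e^{-2iπ⟨m,θ⟩}Q`, where `m = mh/2 ∈ (1/2)ℤ^d`. -/
def triv (P Q : M2C) (mh : Fin d → ℤ) (θ : Fin d → ℝ) : M2C :=
  eK (dotZ mh θ / 2) • P + eK (-(dotZ mh θ / 2)) • Q

/-- truncation at order `N` of the Fourier series of a period-1 function. -/
def truncC (F : (Fin d → ℝ) → M2C) (N : ℝ) (θ : Fin d → ℝ) : M2C :=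
  Matrix.of fun i j =>
    ∑' k : Fin d → ℤ,
      if absZ k ≤ N then fCoeff 1 F (fun i => (k i : ℝ)) i j * eK (dotZ k θ) else 0

def trunc (F : (Fin d → ℝ) → M2R) (N : ℝ) (θ : Fin d → ℝ) : M2R :=
  Matrix.of fun i j => (truncC (cLift F) N θ i j).re

/-- the 0-th Fourier coefficient `F̂(0)` as a real matrix -/
def hat0 (F : (Fin d → ℝ) → M2R) : M2R :=
  Matrix.of fun i j => (fCoeff 1 (cLift F) 0 i j).re

/-- standing hypotheses on the weight function Λ -/
structure LamHyp (Λ : ℝ → ℝ) : Prop where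
  mono : StrictMonoOn Λ (Set.Ici 0)
  diff : DifferentiableOn ℝ Λ (Set.Ici 0)
  nonneg : ∀ x, 0 ≤ x → 0 ≤ Λ x
  subadd : ∀ x y, 0 ≤ x → 0 ≤ y → Λ (x + y) ≤ Λ x + Λ y

/-- standing hypotheses on the approximation function Ψ -/
structure PsiHyp (Ψ : ℝ → ℝ) : Prop where
  mono : StrictMonoOn Ψ (Set.Ici 0)
  diff : DifferentiableOn ℝ Ψ (Set.Ici 0)
  ge_id : ∀ x, 0 ≤ x → x ≤ Ψ x
  superadd : ∀ x y, 1 ≤ x → 1 ≤ y → Ψ x + Ψ y ≤ Ψ (x + y)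

/-- arithmetic condition `|⟨k,ω⟩| ≥ κ/Ψ(|k|)` on the integer lattice -/
def ArithZ0 (ω : Fin d → ℝ) (Ψ : ℝ → ℝ) (κ : ℝ) : Prop :=
  ∀ k : Fin d → ℤ, k ≠ 0 → κ / Ψ (absZ k) ≤ |dotZ k ω|

/-- arithmetic condition `|2π⟨k,ω⟩| ≥ κ/Ψ(|k|)` on the integer lattice -/
def ArithZ (ω : Fin d → ℝ) (Ψ : ℝ → ℝ) (κ : ℝ) : Prop :=
  ∀ k : Fin d → ℤ, k ≠ 0 → κ / Ψ (absZ k) ≤ |2 * π * dotZ k ω|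

/-- arithmetic condition on the half-integer lattice (`k/2`, `k ∈ ℤ^d∖{0}`) -/
def ArithH (ω : Fin d → ℝ) (Ψ : ℝ → ℝ) (κ : ℝ) : Prop :=
  ∀ k : Fin d → ℤ, k ≠ 0 → κ / Ψ (absZ k / 2) ≤ |2 * π * (dotZ k ω / 2)|

/-- `C₀` bounds the spectral projections of matrices with `κ'`-separated eigenvalues. -/
def ProjBound (C₀ : ℝ) : Prop :=
  1 ≤ C₀ ∧ ∀ (A : M2R) (κ' : ℝ) (α β : ℂ) (P Q : M2C), 0 < κ' →
    eigPair A α β → κ' ≤ ‖α - β‖ → IsSpectralDecomp A α β P Q →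
    nrmC P ≤ C₀ * (1 / κ') ^ 6

open Polynomial in
lemma charpoly_fin_two' (M : Matrix (Fin 2) (Fin 2) ℂ) :
    M.charpoly = X^2 - C M.trace * X + C M.det := by
  rw [Matrix.charpoly, Matrix.det_fin_two]
  simp [Matrix.charmatrix_apply_eq, Matrix.charmatrix_apply_ne, Matrix.trace_fin_two,
    Matrix.det_fin_two]
  ring

lemma map_trace' (A : M2R) : (A.map (fun x => (x:ℂ))).trace = (A.trace : ℂ) := by
  simp [Matrix.trace_fin_two, Matrix.map_apply]

lemma map_det' (A : M2R) : (A.map (fun x => (x:ℂ))).det = (A.det : ℂ) := by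
  simp [Matrix.det_fin_two, Matrix.map_apply]

open Polynomial in
lemma eigPair_trace_det {A : M2R} {α β : ℂ} (h : eigPair A α β) :
    α + β = (A.trace : ℂ) ∧ α * β = (A.det : ℂ) := by
  unfold eigPair at h
  rw [charpoly_fin_two', map_trace', map_det'] at h
  have hr : (X - C α) * (X - C β) = X^2 - C (α+β) * X + C (α*β) := by
    rw [C_add, C_mul]; ring
  rw [hr] at h
  constructor
  · have := congrArg (fun p => Polynomial.coeff p 1) h
    simp [coeff_X_pow, coeff_C] at this
    linear_combination this
  · have := congrArg (fun p => Polynomial.coeff p 0) h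
    simp [coeff_X_pow, coeff_C] at this
    exact this.symm

open Polynomial in
lemma eigPair_exists (A : M2R) (h : A.trace = 0) : ∃ α : ℂ, eigPair A α (-α) := by
  obtain ⟨α, hα⟩ := IsAlgClosed.exists_pow_nat_eq (-(A.det : ℂ)) (n := 2) (by norm_num)
  refine ⟨α, ?_⟩
  unfold eigPair
  rw [charpoly_fin_two', map_trace', map_det', h]
  have hr : (X - C α) * (X - C (-α)) = X^2 - C (α + -α) * X + C (α * -α) := by
    rw [C_add, C_mul]; ring
  have h2 : α * -α = (A.det : ℂ) := by linear_combination -hα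
  rw [hr, h2]
  norm_num

lemma eigPair_symm {A : M2R} {α β : ℂ} (h : eigPair A α β) : eigPair A β α := by
  unfold eigPair at *; rw [h]; ring

lemma entry_le_nrmR (A : M2R) (i j : Fin 2) : |A i j| ≤ nrmR A := by
  refine le_trans (le_ciSup (f := fun j => |A i j|) (Set.Finite.bddAbove (Set.finite_range _)) j) ?_
  exact le_ciSup (f := fun i => ⨆ j, |A i j|) (Set.Finite.bddAbove (Set.finite_range _)) i

lemma nrmR_nonneg (A : M2R) : 0 ≤ nrmR A :=
  le_trans (abs_nonneg _) (entry_le_nrmR A 0 0)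

lemma one_le_absZ {d : ℕ} {k : Fin d → ℤ} (hk : k ≠ 0) : 1 ≤ absZ k := by
  obtain ⟨i, hi⟩ := Function.ne_iff.mp hk
  have h1 : (1:ℝ) ≤ |(k i : ℝ)| := by
    rw [← Int.cast_abs]
    exact_mod_cast Int.one_le_abs (by simpa using hi)
  refine le_trans h1 ?_
  exact Finset.single_le_sum (fun j _ => abs_nonneg ((k j : ℝ))) (Finset.mem_univ i)

set_option maxHeartbeats 2000000 in
/-- Lemma 9.1: stability of the `BR` spectrum under constant perturbation. -/
theorem BR_spectrum_perturbation
    {d : ℕ} (hd : 1 ≤ d) (ω : Fin d → ℝ) (hind : RatIndep ω) (hω : ∀ i, |ω i| ≤ 1)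
    (Ψ : ℝ → ℝ) (hΨ : PsiHyp Ψ)
    (κ' : ℝ) (hκ'0 : 0 < κ') (hκ'1 : κ' < 1)
    (Ftil : M2R) (hFtr : Ftil.trace = 0) (epsTil : ℝ) (hε : epsTil = nrmR Ftil)
    (Ntil : ℕ) (Atil : M2R) (hAtr : Atil.trace = 0)
    (hspec : HasBR ω Ψ κ' (Ntil : ℝ) Atil)
    (hsmall : epsTil ≤ (κ' / (32 * (1 + nrmR Atil))) ^ 2 * (1 / Ψ (Ntil : ℝ) ^ 2)) :
    HasBR ω Ψ (3 * κ' / 4) (Ntil : ℝ) (Atil + Ftil) := by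
  intro α β hpair k hk hkN
  set Q := Ψ (absZ k) with hQ
  set P := Ψ (Ntil : ℝ) with hP
  set a := nrmR Atil with ha
  set z : ℂ := ((2 * π * dotZ k ω : ℝ) : ℂ) * Complex.I with hz
  have hk1 : 1 ≤ absZ k := one_le_absZ hk
  have hk0 : (0:ℝ) ≤ absZ k := by linarith
  have hN0 : (0:ℝ) ≤ (Ntil : ℝ) := Nat.cast_nonneg _
  have hQ1 : 1 ≤ Q := le_trans hk1 (hΨ.ge_id _ hk0)
  have hQP : Q ≤ P := hΨ.mono.monotoneOn hk0 hN0 hkN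
  have hP1 : 1 ≤ P := le_trans hQ1 hQP
  have hQpos : 0 < Q := by linarith
  have hPpos : 0 < P := by linarith
  have ha0 : 0 ≤ a := nrmR_nonneg Atil
  have hε0 : 0 ≤ epsTil := hε ▸ nrmR_nonneg Ftil
  have hεsmall : epsTil ≤ κ' ^ 2 / (1024 * (1 + a) ^ 2 * P ^ 2) := by
    refine hsmall.trans (le_of_eq ?_)
    field_simp
    ring
  have hε1 : epsTil ≤ 1 := by
    refine hεsmall.trans ?_
    rw [div_le_one (by positivity)]
    have hA2 : (1:ℝ) ≤ (1 + a) ^ 2 := by nlinarith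
    have hP2 : (1:ℝ) ≤ P ^ 2 := by nlinarith
    have hprod2 : (1:ℝ) * 1 ≤ (1 + a) ^ 2 * P ^ 2 :=
      mul_le_mul hA2 hP2 zero_le_one (by positivity)
    nlinarith
  have htr0 : ((Atil + Ftil).trace : ℝ) = 0 := by
    rw [Matrix.trace_add, hAtr, hFtr]; ring
  obtain ⟨h1, h2⟩ := eigPair_trace_det hpair
  have h1' : α + β = 0 := by rw [h1, htr0]; norm_num
  set δ : ℂ := α - β with hδ
  have hδ2 : δ ^ 2 = -4 * (((Atil + Ftil).det : ℝ) : ℂ) := by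
    rw [hδ]; linear_combination (α + β) * h1' - 4 * h2
  obtain ⟨α₀, h0pair⟩ := eigPair_exists Atil hAtr
  obtain ⟨h01, h02⟩ := eigPair_trace_det h0pair
  set δ₀ : ℂ := 2 * α₀ with hδ₀
  have hδ₀2 : δ₀ ^ 2 = -4 * ((Atil.det : ℝ) : ℂ) := by
    rw [hδ₀]; linear_combination -4 * h02
  have hFb : ∀ i j, |Ftil i j| ≤ epsTil := fun i j => hε ▸ entry_le_nrmR Ftil i j
  have hAb : ∀ i j, |Atil i j| ≤ a := fun i j => entry_le_nrmR Atil i j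
  have hdet : |(Atil + Ftil).det - Atil.det| ≤ 4 * a * epsTil + 2 * epsTil ^ 2 := by
    have e : (Atil + Ftil).det - Atil.det =
        Atil 0 0 * Ftil 1 1 + Ftil 0 0 * Atil 1 1 + Ftil 0 0 * Ftil 1 1
          - Atil 0 1 * Ftil 1 0 - Ftil 0 1 * Atil 1 0 - Ftil 0 1 * Ftil 1 0 := by
      simp [Matrix.det_fin_two, Matrix.add_apply]
      ring
    rw [e]
    have t1 : |Atil 0 0 * Ftil 1 1| ≤ a * epsTil := by
      rw [abs_mul]; exact mul_le_mul (hAb 0 0) (hFb 1 1) (abs_nonneg _) ha0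
    have t2 : |Ftil 0 0 * Atil 1 1| ≤ epsTil * a := by
      rw [abs_mul]; exact mul_le_mul (hFb 0 0) (hAb 1 1) (abs_nonneg _) hε0
    have t3 : |Ftil 0 0 * Ftil 1 1| ≤ epsTil * epsTil := by
      rw [abs_mul]; exact mul_le_mul (hFb 0 0) (hFb 1 1) (abs_nonneg _) hε0
    have t4 : |Atil 0 1 * Ftil 1 0| ≤ a * epsTil := by
      rw [abs_mul]; exact mul_le_mul (hAb 0 1) (hFb 1 0) (abs_nonneg _) ha0
    have t5 : |Ftil 0 1 * Atil 1 0| ≤ epsTil * a := by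
      rw [abs_mul]; exact mul_le_mul (hFb 0 1) (hAb 1 0) (abs_nonneg _) hε0
    have t6 : |Ftil 0 1 * Ftil 1 0| ≤ epsTil * epsTil := by
      rw [abs_mul]; exact mul_le_mul (hFb 0 1) (hFb 1 0) (abs_nonneg _) hε0
    have hsq : epsTil * epsTil = epsTil ^ 2 := (sq epsTil).symm
    rw [abs_le]
    constructor
    · linarith [neg_abs_le (Atil 0 0 * Ftil 1 1), neg_abs_le (Ftil 0 0 * Atil 1 1),
        neg_abs_le (Ftil 0 0 * Ftil 1 1), le_abs_self (Atil 0 1 * Ftil 1 0),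
        le_abs_self (Ftil 0 1 * Atil 1 0), le_abs_self (Ftil 0 1 * Ftil 1 0)]
    · linarith [le_abs_self (Atil 0 0 * Ftil 1 1), le_abs_self (Ftil 0 0 * Atil 1 1),
        le_abs_self (Ftil 0 0 * Ftil 1 1), neg_abs_le (Atil 0 1 * Ftil 1 0),
        neg_abs_le (Ftil 0 1 * Atil 1 0), neg_abs_le (Ftil 0 1 * Ftil 1 0)]
  have habs : ‖δ ^ 2 - δ₀ ^ 2‖ ≤ 16 * (1 + a) * epsTil := by
    have hdiff : δ ^ 2 - δ₀ ^ 2 = (((-4) * ((Atil + Ftil).det - Atil.det) : ℝ) : ℂ) := by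
      push_cast
      rw [hδ2, hδ₀2]; ring
    rw [hdiff, Complex.norm_real, Real.norm_eq_abs, abs_mul]
    have h4 : |(-4 : ℝ)| = 4 := by norm_num
    rw [h4]
    nlinarith
  have key : ‖δ - δ₀‖ ≤ κ' / (4 * Q) ∨ ‖δ + δ₀‖ ≤ κ' / (4 * Q) := by
    by_contra hcon
    push_neg at hcon
    obtain ⟨hu, hv⟩ := hcon
    have hBpos : 0 < κ' / (4 * Q) := by positivity
    have hprod : ‖δ - δ₀‖ * ‖δ + δ₀‖ = ‖δ ^ 2 - δ₀ ^ 2‖ := by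
      rw [← norm_mul]; congr 1; ring
    have hlt : κ' / (4 * Q) * (κ' / (4 * Q)) <
        ‖δ - δ₀‖ * ‖δ + δ₀‖ :=
      mul_lt_mul'' hu hv (le_of_lt hBpos) (le_of_lt hBpos)
    have hupper : 16 * (1 + a) * epsTil ≤ κ' ^ 2 / (64 * P ^ 2) := by
      have h1a : (0:ℝ) < 1 + a := by linarith
      have step1 : 16 * (1 + a) * epsTil ≤
          16 * (1 + a) * (κ' ^ 2 / (1024 * (1 + a) ^ 2 * P ^ 2)) :=
        mul_le_mul_of_nonneg_left hεsmall (by positivity)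
      refine step1.trans ?_
      have heq : 16 * (1 + a) * (κ' ^ 2 / (1024 * (1 + a) ^ 2 * P ^ 2)) =
          κ' ^ 2 / (64 * (1 + a) * P ^ 2) := by
        field_simp
        ring
      rw [heq]
      gcongr
      nlinarith
    have hBB : κ' / (4 * Q) * (κ' / (4 * Q)) = κ' ^ 2 / (16 * Q ^ 2) := by
      field_simp
      ring
    have hmono : κ' ^ 2 / (64 * P ^ 2) ≤ κ' ^ 2 / (64 * Q ^ 2) := by
      gcongr
    have hstrict : κ' ^ 2 / (64 * Q ^ 2) < κ' ^ 2 / (16 * Q ^ 2) := by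
      apply div_lt_div_of_pos_left (by positivity) (by positivity)
      nlinarith
    rw [hBB, hprod] at hlt
    linarith
  have hid : 3 * κ' / 4 / Q = κ' / Q - κ' / (4 * Q) := by
    field_simp
    ring
  rcases key with hcase | hcase
  · have hBR1 := hspec α₀ (-α₀) h0pair k hk hkN
    have hδ₀z : α₀ - -α₀ - z = δ₀ - z := by rw [hδ₀]; ring
    rw [hδ₀z] at hBR1
    have tri : ‖δ₀ - z‖ ≤ ‖δ - z‖ + ‖δ - δ₀‖ := by
      have e : δ₀ - z = (δ - z) + (δ₀ - δ) := by ring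
      rw [e]
      refine (norm_add_le _ _).trans ?_
      exact add_le_add le_rfl (le_of_eq (norm_sub_rev δ₀ δ))
    have hfin : κ' / Q ≤ ‖δ - z‖ + κ' / (4 * Q) := by
      calc κ' / Q ≤ ‖δ₀ - z‖ := hBR1
        _ ≤ ‖δ - z‖ + ‖δ - δ₀‖ := tri
        _ ≤ ‖δ - z‖ + κ' / (4 * Q) := by linarith
    rw [hid]
    linarith
  · have hBR2 := hspec (-α₀) α₀ (eigPair_symm h0pair) k hk hkN
    have hδ₀z : -α₀ - α₀ - z = -δ₀ - z := by rw [hδ₀]; ring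
    rw [hδ₀z] at hBR2
    have tri : ‖-δ₀ - z‖ ≤ ‖δ - z‖ + ‖δ + δ₀‖ := by
      have e : -δ₀ - z = (δ - z) + (-δ₀ - δ) := by ring
      rw [e]
      refine (norm_add_le _ _).trans ?_
      have hnn : ‖-δ₀ - δ‖ = ‖δ + δ₀‖ := by
        rw [show -δ₀ - δ = -(δ + δ₀) by ring]
        exact norm_neg _
      exact add_le_add le_rfl (le_of_eq hnn)
    have hfin : κ' / Q ≤ ‖δ - z‖ + κ' / (4 * Q) := by
      calc κ' / Q ≤ ‖-δ₀ - z‖ := hBR2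
        _ ≤ ‖δ - z‖ + ‖δ + δ₀‖ := tri
        _ ≤ ‖δ - z‖ + κ' / (4 * Q) := by linarith
    rw [hid]
    linarith


end AR
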